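/- arXiv:2305.07525 — 6 statements merged into one kernel-verified Lean document; each statement's English description precedes it below -/
import Mathlib

section
/- Let m be a median of the agent positions, let t and s be the closest and second-closest candidate locations to m, and let (o_1, o_2) be any pair of distinct candidate locations. Then \sum_i (|x_i - t| + |x_i - s|) \le 3 \sum_i (|x_i - o_1| + |x_i - o_2|). That is, the Median mechanism for two facilities has approximation ratio at most 3 for the social cost on homogeneous instances. -/
/-- The Median mechanism for two facilities has social-cost approximation ratio
at most 3 on homogeneous instances. -/
theorem median_mechanism_two_facilities_approx_three (n : ℕ) (x : Fin n → ℝ)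
    (C : Finset ℝ) (hC : 2 ≤ C.card) (m : ℝ)
    (hm : ∀ y : ℝ, ∑ i, |x i - m| ≤ ∑ i, |x i - y|)
    (t s : ℝ) (htC : t ∈ C) (ht : ∀ c ∈ C, |m - t| ≤ |m - c|)
    (hsC : s ∈ C) (hst : s ≠ t) (hs : ∀ c ∈ C, c ≠ t → |m - s| ≤ |m - c|)
    (o₁ o₂ : ℝ) (ho₁ : o₁ ∈ C) (ho₂ : o₂ ∈ C) (ho : o₁ ≠ o₂) :
    ∑ i, (|x i - t| + |x i - s|) ≤ 3 * ∑ i, (|x i - o₁| + |x i - o₂|) := by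
  set A := ∑ i, |x i - m| with hA
  have hub : ∀ c : ℝ, ∑ i, |x i - c| ≤ A + n * |m - c| := by
    intro c
    have key : ∀ i : Fin n, |x i - c| ≤ |x i - m| + |m - c| := fun i => abs_sub_le (x i) m c
    calc ∑ i, |x i - c| ≤ ∑ i, (|x i - m| + |m - c|) :=
          Finset.sum_le_sum (fun i _ => key i)
      _ = A + n * |m - c| := by
          rw [Finset.sum_add_distrib, Finset.sum_const, Finset.card_univ, Fintype.card_fin,
            nsmul_eq_mul]
  have hlb : ∀ c : ℝ, (n : ℝ) * |m - c| - A ≤ ∑ i, |x i - c| := by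
    intro c
    have key : ∀ i : Fin n, |m - c| - |x i - m| ≤ |x i - c| := by
      intro i
      have h1 : |m - c| ≤ |m - x i| + |x i - c| := abs_sub_le m (x i) c
      have h2 : |m - x i| = |x i - m| := abs_sub_comm m (x i)
      linarith
    calc (n:ℝ) * |m - c| - A = ∑ i : Fin n, (|m - c| - |x i - m|) := by
          rw [Finset.sum_sub_distrib, Finset.sum_const, Finset.card_univ, Fintype.card_fin,
            nsmul_eq_mul]
      _ ≤ ∑ i, |x i - c| := Finset.sum_le_sum (fun i _ => key i)
  have hkey : |m - t| + |m - s| ≤ |m - o₁| + |m - o₂| := by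
    by_cases h1 : o₁ = t
    · have h2 : o₂ ≠ t := h1 ▸ ho.symm
      have hb := hs o₂ ho₂ h2
      have ha := ht o₁ ho₁
      linarith
    · by_cases h2 : o₂ = t
      · have hb := hs o₁ ho₁ h1
        have ha := ht o₂ ho₂
        linarith
      · have hb := hs o₁ ho₁ h1
        have ha := ht o₂ ho₂
        linarith
  have hn : (0:ℝ) ≤ (n:ℝ) := Nat.cast_nonneg n
  have hkey' : (n:ℝ) * (|m - t| + |m - s|) ≤ (n:ℝ) * (|m - o₁| + |m - o₂|) :=
    mul_le_mul_of_nonneg_left hkey hn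
  have ht1 := hub t
  have hs1 := hub s
  have hA1 := hm o₁
  have hA2 := hm o₂
  have hl1 := hlb o₁
  have hl2 := hlb o₂
  rw [Finset.sum_add_distrib, Finset.sum_add_distrib]
  rcases le_total ((n:ℝ) * (|m - o₁| + |m - o₂|)) (4 * A) with h | h
  · nlinarith [hA1, hA2, ht1, hs1, hkey', h]
  · nlinarith [hl1, hl2, ht1, hs1, hkey', h]
end

section
/- Let \alpha = \sqrt{2} - 1 and let a, b > 0 be reals. Then ((1-\alpha) a + b + \alpha \max(a, b)) / ((1-\alpha) b + \alpha \max(a, b)) \le 1 + \sqrt{2}. -/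
/-- Case 2 (subcase w₁ = o₂) inequality of the (√2−1)-Statistic analysis. -/
theorem alpha_statistic_case2a (a b : ℝ) (ha : 0 < a) (hb : 0 < b) :
    ((1 - (Real.sqrt 2 - 1)) * a + b + (Real.sqrt 2 - 1) * max a b) /
      ((1 - (Real.sqrt 2 - 1)) * b + (Real.sqrt 2 - 1) * max a b)
      ≤ 1 + Real.sqrt 2 := by
  have hs : Real.sqrt 2 ^ 2 = 2 := Real.sq_sqrt (by norm_num)
  have h1 : (1:ℝ) < Real.sqrt 2 := by nlinarith [Real.sqrt_nonneg 2]
  have h2 : Real.sqrt 2 < 2 := by nlinarith [Real.sqrt_nonneg 2]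
  rcases le_total a b with h | h
  · rw [max_eq_right h, div_le_iff₀ (by nlinarith)]
    nlinarith
  · rw [max_eq_left h, div_le_iff₀ (by nlinarith)]
    nlinarith
end

section
/- Let \alpha = \sqrt{2} - 1 and let a, b > 0 be reals. Then ((1-\alpha) a + b + \alpha \max(a, b)) / (\alpha a + (1-\alpha) b) \le 1 + \sqrt{2}. -/
/-- Case 2 (subcase w₁ > o₂) inequality of the (√2−1)-Statistic analysis. -/
theorem alpha_statistic_case2b (a b : ℝ) (ha : 0 < a) (hb : 0 < b) :
    ((1 - (Real.sqrt 2 - 1)) * a + b + (Real.sqrt 2 - 1) * max a b) /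
      ((Real.sqrt 2 - 1) * a + (1 - (Real.sqrt 2 - 1)) * b)
      ≤ 1 + Real.sqrt 2 := by
  have h2 : Real.sqrt 2 ^ 2 = 2 := Real.sq_sqrt (by norm_num)
  have h1 : 1 < Real.sqrt 2 := by nlinarith [Real.sqrt_nonneg 2]
  have h15 : Real.sqrt 2 < 1.5 := by nlinarith [Real.sqrt_nonneg 2]
  have hden : 0 < (Real.sqrt 2 - 1) * a + (1 - (Real.sqrt 2 - 1)) * b := by nlinarith
  rw [div_le_iff₀ hden]
  rcases max_cases a b with ⟨h, _⟩ | ⟨h, _⟩ <;> rw [h] <;> nlinarith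
end

section
/- Let \ell, r be real numbers with \ell \le r (positions of the leftmost and rightmost agents), and let every agent position lie in [\ell, r]. Let t(\ell) be a closest candidate location to \ell, and let w_2 be either the closest or second-closest candidate location to r. Then for every agent position x \in [\ell, r] and every pair of distinct candidate locations (o_1, o_2): |x - t(\ell)| + |x - w_2| \le 2 \max_{y \in [\ell, r] \cap positions} (|y - o_1| + |y - o_2|), i.e., the Leftmost-Priority mechanism has max-cost approximation ratio at most 2 on homogeneous instances. -/
/-- Leftmost-Priority has max-cost approximation ratio at most 2 on
homogeneous instances. -/
theorem leftmost_priority_max_cost_two (n : ℕ) (hn : 0 < n) (x : Fin n → ℝ)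
    (C : Finset ℝ) (hC : 2 ≤ C.card)
    (ℓ r : ℝ) (hℓr : ℓ ≤ r)
    (hbounds : ∀ i, x i ∈ Set.Icc ℓ r)
    (hℓ : ∃ i, x i = ℓ) (hr : ∃ i, x i = r)
    (t : ℝ) (htC : t ∈ C) (ht : ∀ c ∈ C, |ℓ - t| ≤ |ℓ - c|)
    (w₂ : ℝ) (hw₂C : w₂ ∈ C)
    (hw₂ : (∀ c ∈ C, |r - w₂| ≤ |r - c|) ∨
           (w₂ ≠ t ∧ ∀ c ∈ C, c ≠ t → |r - w₂| ≤ |r - c|))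
    (o₁ o₂ : ℝ) (ho₁ : o₁ ∈ C) (ho₂ : o₂ ∈ C) (ho : o₁ ≠ o₂)
    (hne : (Finset.univ : Finset (Fin n)).Nonempty) :
    ∀ i, |x i - t| + |x i - w₂| ≤
      2 * Finset.univ.sup' hne (fun j => |x j - o₁| + |x j - o₂|) := by
  intro i
  set M := Finset.univ.sup' hne (fun j => |x j - o₁| + |x j - o₂|) with hM
  obtain ⟨iℓ, hiℓ⟩ := hℓ
  obtain ⟨ir, hir⟩ := hr
  have hA : |ℓ - o₁| + |ℓ - o₂| ≤ M := by
    have := Finset.le_sup' (fun j => |x j - o₁| + |x j - o₂|) (Finset.mem_univ iℓ)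
    rw [hiℓ] at this; exact this
  have hB : |r - o₁| + |r - o₂| ≤ M := by
    have := Finset.le_sup' (fun j => |x j - o₁| + |x j - o₂|) (Finset.mem_univ ir)
    rw [hir] at this; exact this
  obtain ⟨p, q, hsum, hwp, htp⟩ : ∃ p q : ℝ,
      (|ℓ - p| + |r - p|) + (|ℓ - q| + |r - q|)
        = (|ℓ - o₁| + |ℓ - o₂|) + (|r - o₁| + |r - o₂|)
      ∧ |r - w₂| ≤ |r - p| ∧ |ℓ - t| ≤ |ℓ - p| := by
    rcases hw₂ with h | ⟨hne', h⟩
    · exact ⟨o₁, o₂, by ring, h o₁ ho₁, ht o₁ ho₁⟩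
    · by_cases h1 : o₁ = t
      · refine ⟨o₂, o₁, by ring, h o₂ ho₂ ?_, ht o₂ ho₂⟩
        intro h2; exact ho (h1.trans h2.symm)
      · exact ⟨o₁, o₂, by ring, h o₁ ho₁ h1, ht o₁ ho₁⟩
  have hdq : r - ℓ ≤ |ℓ - q| + |r - q| := by
    have h1 : r - ℓ ≤ |r - ℓ| := le_abs_self _
    have h2 : |r - ℓ| = |(r - q) + (q - ℓ)| := by ring_nf
    have h3 : |(r - q) + (q - ℓ)| ≤ |r - q| + |q - ℓ| := abs_add_le _ _
    have h4 : |q - ℓ| = |ℓ - q| := abs_sub_comm _ _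
    linarith
  have hlw : |ℓ - w₂| ≤ (r - ℓ) + |r - w₂| := by
    have h2 : |ℓ - w₂| = |(ℓ - r) + (r - w₂)| := by ring_nf
    have h3 : |(ℓ - r) + (r - w₂)| ≤ |ℓ - r| + |r - w₂| := abs_add_le _ _
    have h4 : |ℓ - r| = r - ℓ := by
      rw [abs_of_nonpos (by linarith)]; ring
    linarith
  have hrt : |r - t| ≤ (r - ℓ) + |ℓ - t| := by
    have h2 : |r - t| = |(r - ℓ) + (ℓ - t)| := by ring_nf
    have h3 : |(r - ℓ) + (ℓ - t)| ≤ |r - ℓ| + |ℓ - t| := abs_add_le _ _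
    have h4 : |r - ℓ| = r - ℓ := abs_of_nonneg (by linarith)
    linarith
  have hfl : |ℓ - t| + |ℓ - w₂| ≤ 2 * M := by linarith
  have hfr : |r - t| + |r - w₂| ≤ 2 * M := by linarith
  have hx1 := (hbounds i).1
  have hx2 := (hbounds i).2
  rcases abs_cases (x i - t) with ⟨h1, _⟩ | ⟨h1, _⟩ <;>
    rcases abs_cases (x i - w₂) with ⟨h2, _⟩ | ⟨h2, _⟩ <;>
    rw [h1, h2] <;>
    linarith [le_abs_self (r - t), neg_le_abs (r - t), le_abs_self (ℓ - t),
      neg_le_abs (ℓ - t), le_abs_self (r - w₂), neg_le_abs (r - w₂),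
      le_abs_self (ℓ - w₂), neg_le_abs (ℓ - w₂)]
end

section
/- Let n_1, n_2 > 0, A, B > 0, and s_1, s_2 satisfy n_1/2 \le s_1 \le n_1, n_2/2 \le s_2 \le n_2, and s_1/n_1 \ge s_2/n_2. If moreover B \le A whenever s_1 = n_1 and s_2 = n_2 (capturing w_2 - o_2 \le w_1 - o_1 in that extreme), then the function R(s_1, s_2) = 1 + 2((n_1 - s_1)A + s_2 B)/(s_1 A + (n_2 - s_2)B) satisfies: R is nonincreasing in s_1 and nondecreasing in s_2; and at the extreme (s_1, s_2) = (n_1/2, n_2/2), R = 3. -/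
/-- The final optimization step in the social-cost-3 analysis of
Proportional-Majority-Median. -/
theorem pmm_ratio_monotone (n₁ n₂ A B s₁ s₂ : ℝ)
    (hn₁ : 0 < n₁) (hn₂ : 0 < n₂) (hA : 0 < A) (hB : 0 < B)
    (hs₁ : n₁ / 2 ≤ s₁ ∧ s₁ ≤ n₁) (hs₂ : n₂ / 2 ≤ s₂ ∧ s₂ ≤ n₂)
    (hprop : s₂ / n₂ ≤ s₁ / n₁)
    (hext : s₁ = n₁ ∧ s₂ = n₂ → B ≤ A)
    (R : ℝ → ℝ → ℝ)
    (hR : ∀ s u, R s u = 1 + 2 * ((n₁ - s) * A + u * B) / (s * A + (n₂ - u) * B)) :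
    (∀ s s', n₁ / 2 ≤ s → s ≤ s' → s' ≤ n₁ → R s' s₂ ≤ R s s₂) ∧
    (∀ u u', n₂ / 2 ≤ u → u ≤ u' → u' ≤ n₂ → R s₁ u ≤ R s₁ u') ∧
    R (n₁ / 2) (n₂ / 2) = 3 := by
  obtain ⟨hs₁l, hs₁r⟩ := hs₁
  obtain ⟨hs₂l, hs₂r⟩ := hs₂
  refine ⟨?_, ?_, ?_⟩
  · intro s s' hl hm hr
    rw [hR, hR]
    have hd : 0 < s * A + (n₂ - s₂) * B := by nlinarith
    have hd' : 0 < s' * A + (n₂ - s₂) * B := by nlinarith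
    apply add_le_add_right
    rw [div_le_div_iff₀ hd' hd]
    nlinarith [mul_nonneg (mul_nonneg hA.le (sub_nonneg.2 hm))
      (by nlinarith : (0:ℝ) ≤ n₁ * A + (n₂ - s₂) * B + s₂ * B)]
  · intro u u' hl hm hr
    rw [hR, hR]
    have hd : 0 < s₁ * A + (n₂ - u) * B := by nlinarith
    have hd' : 0 < s₁ * A + (n₂ - u') * B := by nlinarith
    apply add_le_add_right
    rw [div_le_div_iff₀ hd hd']
    nlinarith [mul_nonneg (mul_nonneg hB.le (sub_nonneg.2 hm))
      (by nlinarith : (0:ℝ) ≤ s₁ * A + (n₁ - s₁) * A + n₂ * B)]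
  · have hd : (0:ℝ) < n₁ / 2 * A + (n₂ - n₂ / 2) * B := by nlinarith
    have hND : (n₁ - n₁ / 2) * A + n₂ / 2 * B = n₁ / 2 * A + (n₂ - n₂ / 2) * B := by ring
    rw [hR, hND, mul_div_assoc, div_self hd.ne']
    norm_num
end

section
/- Let \ell_2, r_2, o_2, w_1, L, R, o_1, \ell_1, i be reals with L \le w_1 \le R, w_1 = o_2, |\ell_1 - w_1| \le |\ell_1 - c| for c \in {o_1, L, R}, o_1 \le L, and i \in {\ell_2, r_2}. Then |i - L| \le |i - o_2| + 2|\ell_1 - o_1|. In particular if |i - o_2| \le M and |\ell_1 - o_1| \le M then |i - L| \le 3M. -/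
/-- Key triangle-inequality chain in Case 1 (subcase o₁ ≤ L) of the
max-cost-3 analysis of Vote-for-Priority. -/
theorem vote_for_priority_case1 (ℓ₂ r₂ o₂ w₁ L R o₁ ℓ₁ i : ℝ)
    (hLR : L ≤ w₁ ∧ w₁ ≤ R) (hw : w₁ = o₂)
    (hclosest : |ℓ₁ - w₁| ≤ |ℓ₁ - o₁| ∧ |ℓ₁ - w₁| ≤ |ℓ₁ - L| ∧ |ℓ₁ - w₁| ≤ |ℓ₁ - R|)
    (ho₁ : o₁ ≤ L) (hi : i = ℓ₂ ∨ i = r₂) :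
    |i - L| ≤ |i - o₂| + 2 * |ℓ₁ - o₁| ∧
    ∀ M : ℝ, |i - o₂| ≤ M → |ℓ₁ - o₁| ≤ M → |i - L| ≤ 3 * M := by
  obtain ⟨hL, hR⟩ := hLR
  obtain ⟨h1, h2, h3⟩ := hclosest
  have hkey : |o₂ - L| ≤ 2 * |ℓ₁ - o₁| := by
    rcases abs_cases (ℓ₁ - w₁) with ⟨e1, _⟩ | ⟨e1, _⟩ <;>
    rcases abs_cases (ℓ₁ - o₁) with ⟨e2, _⟩ | ⟨e2, _⟩ <;>
    rcases abs_cases (ℓ₁ - L) with ⟨e3, _⟩ | ⟨e3, _⟩ <;>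
    rcases abs_cases (o₂ - L) with ⟨e4, _⟩ | ⟨e4, _⟩ <;>
    subst hw <;> linarith
  have htri : |i - L| ≤ |i - o₂| + |o₂ - L| := by
    calc |i - L| = |(i - o₂) + (o₂ - L)| := by ring_nf
    _ ≤ |i - o₂| + |o₂ - L| := abs_add_le _ _
  constructor
  · linarith
  · intro M hM1 hM2; linarith
end
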